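/- Every coherent chain a in an augmented directed complex with loop-free unitary basis satisfies a ≤ 1, i.e., every basis element appears in a with coefficient at most 1. -/

import Mathlib

/-! Chains in an augmented directed complex with basis.  An augmented directed complex
with basis `B` is encoded by a degree function `deg : B → ℕ`, a differential given on
basis elements `diff : B → (B →₀ ℤ)` and an augmentation `aug : B → ℤ` on the basis
(the predicate `IsADC` expresses the chain-complex and augmentation axioms).
A *chain* is a finitely supported function `B → ℕ`, i.e. a nonnegative combination of
basis elements. -/

namespace Chains

/-- Positive part of an integral combination, as a chain. -/
noncomputable def posPart {B : Type*} (x : B →₀ ℤ) : B →₀ ℕ :=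
  x.mapRange Int.toNat (by simp)

/-- Negative part of an integral combination, as a chain. -/
noncomputable def negPart {B : Type*} (x : B →₀ ℤ) : B →₀ ℕ :=
  x.mapRange (fun k => (-k).toNat) (by simp)

/-- Inclusion of chains into integral combinations. -/
noncomputable def toInt {B : Type*} (a : B →₀ ℕ) : B →₀ ℤ :=
  a.mapRange (Nat.cast : ℕ → ℤ) (by simp)

/-- Pointwise minimum (`∧`) of chains. -/
noncomputable def cmin {B : Type*} [DecidableEq B] (a a' : B →₀ ℕ) : B →₀ ℕ :=
  Finsupp.zipWith min (by simp) a a'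

/-- Pointwise maximum (`∨`) of chains. -/
noncomputable def cmax {B : Type*} [DecidableEq B] (a a' : B →₀ ℕ) : B →₀ ℕ :=
  Finsupp.zipWith max (by simp) a a'

/-- Truncated subtraction (`∖`) of chains. -/
noncomputable def csub {B : Type*} [DecidableEq B] (a a' : B →₀ ℕ) : B →₀ ℕ :=
  Finsupp.zipWith (fun m n => m - n) (by simp) a a'

/-- The differential extended to chains. -/
noncomputable def bdry {B : Type*} (diff : B → B →₀ ℤ) (a : B →₀ ℕ) : B →₀ ℤ :=
  a.sum fun b k => (k : ℤ) • diff b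

/-- The positive (`α = true`) and negative (`α = false`) part of the differential. -/
noncomputable def bdryP {B : Type*} (diff : B → B →₀ ℤ) (α : Bool) (a : B →₀ ℕ) :
    B →₀ ℕ :=
  if α then posPart (bdry diff a) else negPart (bdry diff a)

open Classical in
/-- The degree-`k` homogeneous part `(a)ₖ` of a chain. -/
noncomputable def homog {B : Type*} (deg : B → ℕ) (k : ℕ) (a : B →₀ ℕ) : B →₀ ℕ :=
  a.filter fun b => deg b = k

open Classical in
/-- The `k`-rest `rₖ(a)`: the part of a chain in degrees `≤ k`. -/
noncomputable def trunc {B : Type*} (deg : B → ℕ) (k : ℕ) (a : B →₀ ℕ) : B →₀ ℕ :=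
  a.filter fun b => deg b ≤ k

/-- One step of the source/target operator: `∂^α((a)_{n+1}) + rₙ(a)`. -/
noncomputable def dstep {B : Type*} [DecidableEq B] (deg : B → ℕ) (diff : B → B →₀ ℤ)
    (α : Bool) (n : ℕ) (a : B →₀ ℕ) : B →₀ ℕ :=
  bdryP diff α (homog deg (n + 1) a) + trunc deg n a

/-- Auxiliary downward recursion for the source/target operators. -/
noncomputable def dmapAux {B : Type*} [DecidableEq B] (deg : B → ℕ) (diff : B → B →₀ ℤ)
    (α : Bool) : ℕ → ℕ → (B →₀ ℕ) → (B →₀ ℕ)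
  | _, 0, a => a
  | n, k + 1, a => dstep deg diff α n (dmapAux deg diff α (n + 1) k a)

/-- Degree of a chain (0 for the zero chain). -/
def degC {B : Type*} (deg : B → ℕ) (a : B →₀ ℕ) : ℕ := a.support.sup deg

/-- The source (`α = false`) and target (`α = true`) operators `d^α_n` on chains:
`d^α_n a = a` if `|a| ≤ n`, and otherwise
`d^α_n a = ∂^α((d^α_{n+1}a)_{n+1}) + rₙ(d^α_{n+1}a)`. -/
noncomputable def dmap {B : Type*} [DecidableEq B] (deg : B → ℕ) (diff : B → B →₀ ℤ)
    (α : Bool) (n : ℕ) (a : B →₀ ℕ) : B →₀ ℕ :=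
  dmapAux deg diff α n (degC deg a - n) a

/-- The augmentation evaluated on a chain. -/
noncomputable def augC {B : Type*} (aug : B → ℤ) (a : B →₀ ℕ) : ℤ :=
  a.sum fun b k => (k : ℤ) * aug b

/-- `e(a) := e(d⁺₀ a)`. -/
noncomputable def eC {B : Type*} [DecidableEq B] (deg : B → ℕ) (diff : B → B →₀ ℤ)
    (aug : B → ℤ) (a : B →₀ ℕ) : ℤ :=
  augC aug (dmap deg diff true 0 a)

/-- A chain is coherent when `e(a) = 1`. -/
def Coherent {B : Type*} [DecidableEq B] (deg : B → ℕ) (diff : B → B →₀ ℤ)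
    (aug : B → ℤ) (a : B →₀ ℕ) : Prop :=
  eC deg diff aug a = 1

/-- The axioms of an augmented directed complex (with basis): the differential decreases
degree by one, vanishes in degree 0, squares to zero, and is annihilated by the
augmentation. -/
structure IsADC {B : Type*} (deg : B → ℕ) (diff : B → B →₀ ℤ) (aug : B → ℤ) : Prop where
  diff_deg : ∀ b b', b' ∈ (diff b).support → deg b' + 1 = deg b
  diff_zero : ∀ b, deg b = 0 → diff b = 0
  diff_sq : ∀ b, ((diff b).sum fun b' k => k • diff b') = 0
  aug_diff : ∀ b, deg b = 1 → ((diff b).sum fun b' k => k * aug b') = 0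

/-- The basis is unitary when the table `⟨b⟩` of every basis element is coherent,
i.e. `e(d^α₀⟨b⟩) = 1` for both `α`. -/
def Unitary {B : Type*} [DecidableEq B] (deg : B → ℕ) (diff : B → B →₀ ℤ)
    (aug : B → ℤ) : Prop :=
  ∀ (b : B) (α : Bool), augC aug (dmap deg diff α 0 (Finsupp.single b 1)) = 1

/-- The elementary relation `x ⊙ₙ y` on basis elements of degree `≥ n`:
`⟨x⟩ₙ⁻ ∧ ⟨y⟩ₙ⁺ ≠ 0`. -/
def relO {B : Type*} [DecidableEq B] (deg : B → ℕ) (diff : B → B →₀ ℤ)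
    (n : ℕ) (x y : B) : Prop :=
  n ≤ deg x ∧ n ≤ deg y ∧
    ¬ Disjoint (dmap deg diff false n (Finsupp.single x 1)).support
        (dmap deg diff true n (Finsupp.single y 1)).support

/-- The basis is loop-free when for every `n` the reflexive-transitive closure of `⊙ₙ`
is a partial order (i.e. is antisymmetric). -/
def LoopFree {B : Type*} [DecidableEq B] (deg : B → ℕ) (diff : B → B →₀ ℤ) : Prop :=
  ∀ (n : ℕ) (x y : B), Relation.ReflTransGen (relO deg diff n) x y →
    Relation.ReflTransGen (relO deg diff n) y x → x = y

/-- The composition degree `|a|_c` of a chain, an element of `ℤ` (with value `-1` when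
the defining set is empty): `sup{ n | ∃ b ≠ b' ∈ supp a, |b| ≥ |b'| > n }`. -/
noncomputable def compDeg {B : Type*} (deg : B → ℕ) (a : B →₀ ℕ) : ℤ :=
  sSup (insert (-1) {n : ℤ | ∃ b ∈ a.support, ∃ b' ∈ a.support,
    b ≠ b' ∧ (deg b' : ℤ) ≤ (deg b : ℤ) ∧ n < (deg b' : ℤ)})

/-- The `n`-composition of chains: `x *ₙ y := (x - d⁻ₙ(x) + y)₊`. -/
noncomputable def compC {B : Type*} [DecidableEq B] (deg : B → ℕ) (diff : B → B →₀ ℤ)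
    (n : ℕ) (x y : B →₀ ℕ) : B →₀ ℕ :=
  posPart (toInt x - toInt (dmap deg diff false n x) + toInt y)

/-- Iterated `n`-composition of a list of chains (associating to the right). -/
noncomputable def compList {B : Type*} [DecidableEq B] (deg : B → ℕ)
    (diff : B → B →₀ ℤ) (n : ℕ) : List (B →₀ ℕ) → (B →₀ ℕ)
  | [] => 0
  | [x] => x
  | x :: y :: l => compC deg diff n x (compList deg diff n (y :: l))

end Chains


set_option linter.unusedSectionVars false
set_option linter.unusedVariables false
set_option maxHeartbeats 1000000

namespace Chains

open Finsupp

variable {B : Type*} [DecidableEq B]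

@[simp] theorem posPart_apply (z : B →₀ ℤ) (y : B) : posPart z y = (z y).toNat := rfl
@[simp] theorem negPart_apply (z : B →₀ ℤ) (y : B) : negPart z y = (-(z y)).toNat := rfl
@[simp] theorem toInt_apply (u : B →₀ ℕ) (y : B) : toInt u y = (u y : ℤ) := rfl

theorem toInt_posPart_sub_negPart (z : B →₀ ℤ) :
    toInt (posPart z) - toInt (negPart z) = z := by
  ext y
  simp only [Finsupp.sub_apply, toInt_apply, posPart_apply, negPart_apply]
  omega

theorem toInt_add (u v : B →₀ ℕ) : toInt (u + v) = toInt u + toInt v := by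
  ext y; simp

@[simp] theorem toInt_zero : toInt (0 : B →₀ ℕ) = 0 := by ext y; simp

theorem posPart_toInt (u : B →₀ ℕ) : posPart (toInt u) = u := by ext y; simp

theorem mem_support_posPart {z : B →₀ ℤ} {y : B} :
    y ∈ (posPart z).support ↔ 0 < z y := by
  rw [Finsupp.mem_support_iff]; simp only [posPart_apply]; omega

theorem mem_support_negPart {z : B →₀ ℤ} {y : B} :
    y ∈ (negPart z).support ↔ z y < 0 := by
  rw [Finsupp.mem_support_iff]; simp only [negPart_apply]; omega

theorem support_posPart_disjoint_negPart (z : B →₀ ℤ) :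
    Disjoint (posPart z).support (negPart z).support := by
  rw [Finset.disjoint_left]
  intro y h1 h2
  rw [mem_support_posPart] at h1
  rw [mem_support_negPart] at h2
  omega

theorem mem_support_toInt {u : B →₀ ℕ} {y : B} :
    y ∈ (toInt u).support ↔ y ∈ u.support := by
  simp [Finsupp.mem_support_iff]

/-- Pairing of an integral combination with a weight function. -/
noncomputable def pairL (f : B → ℤ) : (B →₀ ℤ) →ₗ[ℤ] ℤ :=
  Finsupp.lsum ℤ fun y => LinearMap.toSpanSingleton ℤ ℤ (f y)

theorem pairL_apply (f : B → ℤ) (z : B →₀ ℤ) :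
    pairL f z = z.sum fun y k => k * f y := by
  rw [pairL, Finsupp.lsum_apply]
  rfl

theorem pairL_single (f : B → ℤ) (y : B) (k : ℤ) :
    pairL f (Finsupp.single y k) = k * f y := by
  rw [pairL, Finsupp.lsum_single]; rfl

theorem pairL_nonneg {f : B → ℤ} (hf : ∀ y, 0 ≤ f y) (u : B →₀ ℕ) :
    0 ≤ pairL f (toInt u) := by
  rw [pairL_apply, Finsupp.sum]
  refine Finset.sum_nonneg fun y _ => ?_
  have h1 := hf y
  have h2 : (0:ℤ) ≤ toInt u y := by simp
  exact mul_nonneg h2 h1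

/-- single-term lower bound -/
theorem single_le_pairL {f : B → ℤ} (hf : ∀ y, 0 ≤ f y) (u : B →₀ ℕ) (b : B) :
    (u b : ℤ) * f b ≤ pairL f (toInt u) := by
  rw [pairL_apply, Finsupp.sum]
  by_cases hb : b ∈ (toInt u).support
  · refine Finset.single_le_sum (f := fun y => toInt u y * f y) ?_ hb
    intro y _
    have h1 := hf y
    have h2 : (0:ℤ) ≤ toInt u y := by simp
    exact mul_nonneg h2 h1
  · rw [Finsupp.notMem_support_iff] at hb
    simp only [toInt_apply] at hb
    rw [show ((u b : ℤ)) = 0 from hb, zero_mul]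
    refine Finset.sum_nonneg fun y _ => ?_
    have h1 := hf y
    have h2 : (0:ℤ) ≤ toInt u y := by simp
    exact mul_nonneg h2 h1

theorem pairL_le_of_le {f : B → ℤ} (hf : ∀ y, 0 ≤ f y) {z : B →₀ ℤ} (u : B →₀ ℕ)
    (h : ∀ y, z y ≤ u y) : pairL f z ≤ pairL f (toInt u) := by
  have key : 0 ≤ pairL f (toInt u - z) := by
    have heq : toInt u - z = toInt (posPart (toInt u - z)) := by
      have h2 := toInt_posPart_sub_negPart (toInt u - z)
      have hneg : negPart (toInt u - z) = 0 := by
        ext y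
        simp only [negPart_apply, Finsupp.sub_apply, toInt_apply, Finsupp.coe_zero,
          Pi.zero_apply]
        have := h y; omega
      rw [hneg, toInt_zero, sub_zero] at h2
      exact h2.symm
    rw [heq]
    exact pairL_nonneg hf _
  have hs := map_sub (pairL f) (toInt u) z
  omega

theorem pairL_posPart_ge {f : B → ℤ} (hf : ∀ y, 0 ≤ f y) (z : B →₀ ℤ) :
    pairL f z ≤ pairL f (toInt (posPart z)) := by
  refine pairL_le_of_le hf _ fun y => ?_
  simp only [posPart_apply]; omega

/-- The boundary as a linear map on integral combinations. -/
noncomputable def bdryL (diff : B → B →₀ ℤ) : (B →₀ ℤ) →ₗ[ℤ] (B →₀ ℤ) :=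
  Finsupp.lsum ℤ fun x => LinearMap.toSpanSingleton ℤ (B →₀ ℤ) (diff x)

theorem bdryL_apply (diff : B → B →₀ ℤ) (z : B →₀ ℤ) :
    bdryL diff z = z.sum fun x k => k • diff x := by
  rw [bdryL, Finsupp.lsum_apply]; rfl

theorem bdry_eq_bdryL (diff : B → B →₀ ℤ) (u : B →₀ ℕ) :
    bdry diff u = bdryL diff (toInt u) := by
  rw [bdryL_apply, bdry, toInt]
  rw [Finsupp.sum_mapRange_index (by simp)]

theorem pairL_bdryL (f : B → ℤ) (diff : B → B →₀ ℤ) (z : B →₀ ℤ) :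
    pairL f (bdryL diff z) = pairL (fun x => pairL f (diff x)) z := by
  rw [bdryL_apply, map_finsuppSum, pairL_apply (fun x => pairL f (diff x))]
  refine Finsupp.sum_congr fun x _ => ?_
  rw [map_smul, smul_eq_mul]

theorem bdryL_diff_eq_zero {deg : B → ℕ} {diff : B → B →₀ ℤ} {aug : B → ℤ}
    (hADC : IsADC deg diff aug) (x : B) : bdryL diff (diff x) = 0 := by
  rw [bdryL_apply]
  exact hADC.diff_sq x

theorem bdryL_bdryL {deg : B → ℕ} {diff : B → B →₀ ℤ} {aug : B → ℤ}
    (hADC : IsADC deg diff aug) (z : B →₀ ℤ) : bdryL diff (bdryL diff z) = 0 := by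
  rw [bdryL_apply diff z, map_finsuppSum]
  rw [Finsupp.sum]
  refine Finset.sum_eq_zero fun x _ => ?_
  rw [map_smul, bdryL_diff_eq_zero hADC, smul_zero]

theorem support_bdryL {diff : B → B →₀ ℤ} {z : B →₀ ℤ} {y : B}
    (hy : y ∈ (bdryL diff z).support) : ∃ x ∈ z.support, y ∈ (diff x).support := by
  rw [bdryL_apply] at hy
  have := Finsupp.support_sum hy
  rw [Finset.mem_biUnion] at this
  obtain ⟨x, hx, hyx⟩ := this
  refine ⟨x, hx, ?_⟩
  have := Finsupp.support_smul hyx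
  exact this

/-- degree of elements in the support of the boundary -/
theorem deg_support_bdryL {deg : B → ℕ} {diff : B → B →₀ ℤ} {aug : B → ℤ}
    (hADC : IsADC deg diff aug) {z : B →₀ ℤ} {n : ℕ}
    (hz : ∀ x ∈ z.support, deg x = n + 1) {y : B}
    (hy : y ∈ (bdryL diff z).support) : deg y = n := by
  obtain ⟨x, hx, hyx⟩ := support_bdryL hy
  have := hADC.diff_deg x y hyx
  have := hz x hx
  omega

/-- the augmentation pairing: `augC u = pairL aug (toInt u)` -/
theorem augC_eq_pairL (aug : B → ℤ) (u : B →₀ ℕ) :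
    augC aug u = pairL aug (toInt u) := by
  rw [pairL_apply, augC, toInt]
  rw [Finsupp.sum_mapRange_index (by simp)]

theorem homog_apply (deg : B → ℕ) (k : ℕ) (a : B →₀ ℕ) (y : B) :
    homog deg k a y = if deg y = k then a y else 0 := by
  classical
  rw [homog, Finsupp.filter_apply]

theorem trunc_apply (deg : B → ℕ) (k : ℕ) (a : B →₀ ℕ) (y : B) :
    trunc deg k a y = if deg y ≤ k then a y else 0 := by
  classical
  rw [trunc, Finsupp.filter_apply]

theorem deg_le_degC {deg : B → ℕ} {a : B →₀ ℕ} {y : B} (hy : y ∈ a.support) :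
    deg y ≤ degC deg a := Finset.le_sup hy

theorem apply_eq_zero_of_degC_lt {deg : B → ℕ} {a : B →₀ ℕ} {y : B}
    (hy : degC deg a < deg y) : a y = 0 := by
  by_contra h
  exact absurd (deg_le_degC (deg := deg) (Finsupp.mem_support_iff.mpr h)) (by omega)

theorem degC_le_iff {deg : B → ℕ} {a : B →₀ ℕ} {n : ℕ} :
    degC deg a ≤ n ↔ ∀ y ∈ a.support, deg y ≤ n := Finset.sup_le_iff

theorem degC_single {deg : B → ℕ} (b : B) : degC deg (Finsupp.single b (1:ℕ)) = deg b := by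
  rw [degC, Finsupp.support_single_ne_zero b one_ne_zero, Finset.sup_singleton]

/-- decomposition of a chain into top part and rest -/
theorem homog_add_trunc {deg : B → ℕ} {a : B →₀ ℕ} {N : ℕ} (hN : degC deg a ≤ N)
    (hN1 : 1 ≤ N) : homog deg N a + trunc deg (N - 1) a = a := by
  ext y
  rw [Finsupp.add_apply, homog_apply, trunc_apply]
  by_cases h1 : deg y = N
  · rw [if_pos h1, if_neg (by omega), add_zero]
  · rw [if_neg h1]
    by_cases h2 : deg y ≤ N - 1
    · rw [if_pos h2, zero_add]
    · rw [if_neg h2, zero_add]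
      exact (apply_eq_zero_of_degC_lt (deg := deg) (by omega)).symm

theorem homog_eq_self {deg : B → ℕ} {a : B →₀ ℕ} {m : ℕ}
    (h : ∀ y ∈ a.support, deg y = m) : homog deg m a = a := by
  ext y
  rw [homog_apply]
  by_cases hy : y ∈ a.support
  · rw [if_pos (h y hy)]
  · rw [Finsupp.notMem_support_iff] at hy
    rw [hy]; simp

theorem trunc_eq_zero {deg : B → ℕ} {a : B →₀ ℕ} {k : ℕ}
    (h : ∀ y ∈ a.support, k < deg y) : trunc deg k a = 0 := by
  ext y
  rw [trunc_apply]
  by_cases hy : y ∈ a.support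
  · rw [if_neg (by have := h y hy; omega)]; rfl
  · rw [Finsupp.notMem_support_iff] at hy
    rw [hy]; simp

theorem trunc_eq_self {deg : B → ℕ} {a : B →₀ ℕ} {k : ℕ}
    (h : degC deg a ≤ k) : trunc deg k a = a := by
  ext y
  rw [trunc_apply]
  by_cases hy : y ∈ a.support
  · rw [if_pos (le_trans (deg_le_degC hy) h)]
  · rw [Finsupp.notMem_support_iff] at hy
    rw [hy]; simp

theorem homog_eq_zero {deg : B → ℕ} {a : B →₀ ℕ} {m : ℕ}
    (h : degC deg a < m) : homog deg m a = 0 := by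
  ext y
  rw [homog_apply]
  by_cases hy : y ∈ a.support
  · rw [if_neg (by have := deg_le_degC (deg := deg) hy; omega)]; rfl
  · rw [Finsupp.notMem_support_iff] at hy
    rw [hy]; simp

@[simp] theorem bdry_zero (diff : B → B →₀ ℤ) : bdry diff (0 : B →₀ ℕ) = 0 := by
  rw [bdry, Finsupp.sum_zero_index]

@[simp] theorem posPart_zero : posPart (0 : B →₀ ℤ) = 0 := by ext y; simp
@[simp] theorem negPart_zero : negPart (0 : B →₀ ℤ) = 0 := by ext y; simp

@[simp] theorem bdryP_zero (diff : B → B →₀ ℤ) (α : Bool) : bdryP diff α (0 : B →₀ ℕ) = 0 := by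
  rw [bdryP]; cases α <;> simp

theorem bdry_single (diff : B → B →₀ ℤ) (b : B) :
    bdry diff (Finsupp.single b 1) = diff b := by
  rw [bdry, Finsupp.sum_single_index] <;> simp

/-- dstep is the identity on chains of low degree -/
theorem dstep_eq_self {deg : B → ℕ} {diff : B → B →₀ ℤ} {α : Bool} {n : ℕ} {a : B →₀ ℕ}
    (h : degC deg a ≤ n) : dstep deg diff α n a = a := by
  rw [dstep, homog_eq_zero (by omega), bdryP_zero, zero_add, trunc_eq_self h]

theorem support_add_subset (u v : B →₀ ℕ) :
    (u + v).support ⊆ u.support ∪ v.support := Finsupp.support_add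

theorem degC_dstep_le {deg : B → ℕ} {diff : B → B →₀ ℤ} {aug : B → ℤ}
    (hADC : IsADC deg diff aug) (α : Bool) (n : ℕ) (a : B →₀ ℕ) :
    degC deg (dstep deg diff α n a) ≤ n := by
  rw [degC_le_iff]
  intro y hy
  have := support_add_subset _ _ hy
  rw [Finset.mem_union] at this
  rcases this with h | h
  · -- y in support of bdryP of homog (n+1)
    have hb : y ∈ (bdry diff (homog deg (n+1) a)).support := by
      rw [Finsupp.mem_support_iff]
      rw [bdryP] at h
      cases α
      · simp only [Bool.false_eq_true, if_false] at h
        have := mem_support_negPart.mp h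
        omega
      · simp only [if_true] at h
        have := mem_support_posPart.mp h
        omega
    rw [bdry_eq_bdryL] at hb
    have hdeg : deg y = n := by
      refine deg_support_bdryL hADC (n := n) ?_ hb
      intro x hx
      rw [mem_support_toInt] at hx
      have := Finsupp.mem_support_iff.mp hx
      rw [homog_apply] at this
      by_cases hc : deg x = n + 1
      · exact hc
      · rw [if_neg hc] at this; exact absurd rfl this
    omega
  · have := Finsupp.mem_support_iff.mp h
    rw [trunc_apply] at this
    by_cases hc : deg y ≤ n
    · exact hc
    · rw [if_neg hc] at this; exact absurd rfl this

theorem dmapAux_succ_right {deg : B → ℕ} {diff : B → B →₀ ℤ} (α : Bool) :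
    ∀ (k n : ℕ) (a : B →₀ ℕ),
      dmapAux deg diff α n (k + 1) a = dmapAux deg diff α n k (dstep deg diff α (n + k) a) := by
  intro k
  induction k with
  | zero => intro n a; rfl
  | succ k ih =>
    intro n a
    show dstep deg diff α n (dmapAux deg diff α (n+1) (k+1) a) = _
    rw [ih (n+1) a]
    show _ = dstep deg diff α n (dmapAux deg diff α (n+1) k (dstep deg diff α (n + (k+1)) a))
    rw [show n + (k + 1) = (n + 1) + k by omega]

theorem dmapAux_eq_self {deg : B → ℕ} {diff : B → B →₀ ℤ} {α : Bool} {n : ℕ} {a : B →₀ ℕ}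
    (h : degC deg a ≤ n) : ∀ k, dmapAux deg diff α n k a = a := by
  intro k
  induction k with
  | zero => rfl
  | succ k ih =>
    rw [dmapAux_succ_right, dstep_eq_self (le_trans h (by omega)), ih]

theorem dmapAux_add {deg : B → ℕ} {diff : B → B →₀ ℤ} (α : Bool) :
    ∀ (k m n : ℕ) (a : B →₀ ℕ),
      dmapAux deg diff α n (k + m) a
        = dmapAux deg diff α n k (dmapAux deg diff α (n + k) m a) := by
  intro k
  induction k with
  | zero => intro m n a; simp only [Nat.zero_add, Nat.add_zero]; rfl
  | succ k ih =>
    intro m n a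
    rw [show k + 1 + m = (k + m) + 1 by omega]
    show dstep deg diff α n (dmapAux deg diff α (n+1) (k+m) a)
      = dstep deg diff α n (dmapAux deg diff α (n+1) k (dmapAux deg diff α (n + (k+1)) m a))
    rw [ih m (n+1) a, show n + (k + 1) = (n + 1) + k by omega]

/-- padding: extra steps at the bottom don't matter for low-degree chains -/
theorem dmapAux_pad {deg : B → ℕ} {diff : B → B →₀ ℤ} {α : Bool} {m m' : ℕ} {a : B →₀ ℕ}
    (h : degC deg a ≤ m') (hm : m' ≤ m) :
    dmapAux deg diff α 0 m a = dmapAux deg diff α 0 m' a := by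
  obtain ⟨j, rfl⟩ : ∃ j, m = m' + j := ⟨m - m', by omega⟩
  induction j with
  | zero => rfl
  | succ j ih =>
    rw [show m' + (j+1) = (m' + j) + 1 by omega, dmapAux_succ_right,
      dstep_eq_self (le_trans h (by omega)), ih (by omega)]

theorem degC_dmap_le {deg : B → ℕ} {diff : B → B →₀ ℤ} {aug : B → ℤ}
    (hADC : IsADC deg diff aug) (α : Bool) (n : ℕ) (a : B →₀ ℕ) :
    degC deg (dmap deg diff α n a) ≤ max n (degC deg a) := by
  unfold dmap
  rcases Nat.eq_zero_or_pos (degC deg a - n) with h | h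
  · rw [h]
    exact le_max_right _ _
  · obtain ⟨k, hk⟩ : ∃ k, degC deg a - n = k + 1 := ⟨degC deg a - n - 1, by omega⟩
    rw [hk]
    exact le_trans (degC_dstep_le hADC α n _) (le_max_left _ _)

/-- `dmap α 0` factors through `dmap α n`. -/
theorem dmap_zero_comp {deg : B → ℕ} {diff : B → B →₀ ℤ} {aug : B → ℤ}
    (hADC : IsADC deg diff aug) (α : Bool) (n : ℕ) (a : B →₀ ℕ) :
    dmap deg diff α 0 (dmap deg diff α n a) = dmap deg diff α 0 a := by
  by_cases h : degC deg a ≤ n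
  · have h1 : dmap deg diff α n a = a := by
      unfold dmap
      rw [show degC deg a - n = 0 by omega]
      rfl
    rw [h1]
  · push_neg at h
    obtain ⟨k, hk⟩ : ∃ k, degC deg a - n = k + 1 := ⟨degC deg a - n - 1, by omega⟩
    have hdeg2 : degC deg (dmap deg diff α n a) ≤ n := by
      unfold dmap
      rw [hk]
      exact degC_dstep_le hADC α n _
    have hsplit : degC deg a = n + (degC deg a - n) := by omega
    calc dmap deg diff α 0 (dmap deg diff α n a)
        = dmapAux deg diff α 0 (degC deg (dmap deg diff α n a)) (dmap deg diff α n a) := by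
          unfold dmap; rw [Nat.sub_zero]
      _ = dmapAux deg diff α 0 n (dmap deg diff α n a) :=
          (dmapAux_pad (le_refl _) hdeg2).symm
      _ = dmapAux deg diff α 0 n (dmapAux deg diff α (0 + n) (degC deg a - n) a) := by
          unfold dmap; rw [Nat.zero_add]
      _ = dmapAux deg diff α 0 (n + (degC deg a - n)) a := (dmapAux_add α n _ 0 a).symm
      _ = dmap deg diff α 0 a := by unfold dmap; rw [Nat.sub_zero, ← hsplit]

/-- dmap at level ≥ deg b does not decrease the coefficient at b -/
theorem coeff_le_dmap {deg : B → ℕ} {diff : B → B →₀ ℤ} {b : B} {n : ℕ}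
    (hn : deg b ≤ n) (a : B →₀ ℕ) : a b ≤ dmap deg diff true n a b := by
  unfold dmap
  generalize degC deg a - n = k
  induction k generalizing a with
  | zero => exact le_refl _
  | succ k ih =>
    rw [dmapAux_succ_right]
    refine le_trans ?_ (ih _)
    rw [dstep, Finsupp.add_apply, trunc_apply, if_pos (by omega)]
    omega

/-- `α`-part of an integral combination -/
noncomputable def pPart (α : Bool) (z : B →₀ ℤ) : B →₀ ℕ :=
  if α then posPart z else negPart z

theorem bdryP_eq_pPart (diff : B → B →₀ ℤ) (α : Bool) (u : B →₀ ℕ) :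
    bdryP diff α u = pPart α (bdry diff u) := rfl

/-- the chain of iterated boundaries of the flows of an atom -/
noncomputable def tz (diff : B → B →₀ ℤ) (b : B) : ℕ → (B →₀ ℤ)
  | 0 => diff b
  | j + 1 => bdry diff (posPart (tz diff b j))

theorem bdryL_tz {deg : B → ℕ} {diff : B → B →₀ ℤ} {aug : B → ℤ}
    (hADC : IsADC deg diff aug) (b : B) : ∀ j, bdryL diff (tz diff b j) = 0
  | 0 => bdryL_diff_eq_zero hADC b
  | (j+1) => by
    show bdryL diff (bdry diff (posPart (tz diff b j))) = 0
    rw [bdry_eq_bdryL]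
    exact bdryL_bdryL hADC _

theorem bdry_negPart_tz {deg : B → ℕ} {diff : B → B →₀ ℤ} {aug : B → ℤ}
    (hADC : IsADC deg diff aug) (b : B) (j : ℕ) :
    bdry diff (negPart (tz diff b j)) = tz diff b (j+1) := by
  show _ = bdry diff (posPart (tz diff b j))
  rw [bdry_eq_bdryL, bdry_eq_bdryL]
  have h1 : toInt (posPart (tz diff b j)) - toInt (negPart (tz diff b j)) = tz diff b j :=
    toInt_posPart_sub_negPart _
  have h2 := bdryL_tz hADC b j
  rw [← h1] at h2
  rw [map_sub] at h2
  have h3 := sub_eq_zero.mp h2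
  exact h3.symm

theorem tz_purity {deg : B → ℕ} {diff : B → B →₀ ℤ} {aug : B → ℤ}
    (hADC : IsADC deg diff aug) (b : B) :
    ∀ j, j < deg b → ∀ y ∈ (tz diff b j).support, deg y + (j + 1) = deg b
  | 0, hj, y, hy => hADC.diff_deg b y hy
  | (j+1), hj, y, hy => by
    have hy' : y ∈ (bdryL diff (toInt (posPart (tz diff b j)))).support := by
      rw [show tz diff b (j+1) = bdry diff (posPart (tz diff b j)) from rfl,
        bdry_eq_bdryL] at hy
      exact hy
    obtain ⟨x, hx, hyx⟩ := support_bdryL hy'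
    rw [mem_support_toInt] at hx
    have hx' : x ∈ (tz diff b j).support := by
      rw [Finsupp.mem_support_iff] at hx ⊢
      intro h0
      rw [Finsupp.mem_support_iff] at *
      apply hx
      simp [h0]
    have h1 := tz_purity hADC b j (by omega) x hx'
    have h2 := hADC.diff_deg x y hyx
    omega

/-- the flows of an atom -/
theorem dmapAux_atom {deg : B → ℕ} {diff : B → B →₀ ℤ} {aug : B → ℤ}
    (hADC : IsADC deg diff aug) (α : Bool) (b : B) :
    ∀ k, 1 ≤ k → k ≤ deg b →
      dmapAux deg diff α (deg b - k) k (Finsupp.single b 1) = pPart α (tz diff b (k-1)) := by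
  intro k
  induction k with
  | zero => omega
  | succ k ih =>
    intro _ hk
    rcases Nat.eq_zero_or_pos k with rfl | hk1
    · -- base case k+1 = 1
      show dstep deg diff α (deg b - 1) (dmapAux deg diff α (deg b - 1 + 1) 0 _) = _
      show dstep deg diff α (deg b - 1) (Finsupp.single b 1) = _
      rw [dstep]
      have hsupp : ∀ y ∈ (Finsupp.single b (1:ℕ)).support, deg y = deg b - 1 + 1 := by
        intro y hy
        rw [Finsupp.support_single_ne_zero b one_ne_zero, Finset.mem_singleton] at hy
        subst hy; omega
      rw [homog_eq_self hsupp]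
      have htr : trunc deg (deg b - 1) (Finsupp.single b (1:ℕ)) = 0 := by
        refine trunc_eq_zero fun y hy => ?_
        rw [Finsupp.support_single_ne_zero b one_ne_zero, Finset.mem_singleton] at hy
        subst hy; omega
      rw [htr, add_zero, bdryP_eq_pPart, bdry_single]
      rfl
    · -- inductive step
      have hstep : dmapAux deg diff α (deg b - (k+1)) (k+1) (Finsupp.single b 1)
          = dstep deg diff α (deg b - (k+1))
              (dmapAux deg diff α (deg b - k) k (Finsupp.single b 1)) := by
        show dstep deg diff α (deg b - (k+1)) (dmapAux deg diff α (deg b - (k+1) + 1) k _) = _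
        rw [show deg b - (k+1) + 1 = deg b - k by omega]
      rw [hstep, ih hk1 (by omega)]
      set u := pPart α (tz diff b (k-1)) with hu
      have hdegu : ∀ y ∈ u.support, deg y = deg b - (k+1) + 1 := by
        intro y hy
        have hy' : y ∈ (tz diff b (k-1)).support := by
          rw [Finsupp.mem_support_iff] at hy ⊢
          intro h0
          apply hy
          rw [hu, pPart]
          cases α <;> simp [h0]
        have := tz_purity hADC b (k-1) (by omega) y hy'
        omega
      rw [dstep, homog_eq_self hdegu]
      have htr : trunc deg (deg b - (k+1)) u = 0 := by
        refine trunc_eq_zero fun y hy => ?_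
        have := hdegu y hy
        omega
      rw [htr, add_zero, bdryP_eq_pPart]
      have hbu : bdry diff u = tz diff b k := by
        rw [hu, pPart]
        cases α
        · simp only [Bool.false_eq_true, if_false]
          rw [bdry_negPart_tz hADC, show k - 1 + 1 = k by omega]
        · simp only [if_true]
          have h5 : tz diff b k = bdry diff (posPart (tz diff b (k-1))) := by
            conv_lhs => rw [show k = (k-1)+1 by omega]
            rfl
          exact h5.symm
      rw [hbu]
      rfl

theorem dmap_atom {deg : B → ℕ} {diff : B → B →₀ ℤ} {aug : B → ℤ}
    (hADC : IsADC deg diff aug) (α : Bool) {b : B} {n : ℕ} (hn : n < deg b) :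
    dmap deg diff α n (Finsupp.single b 1) = pPart α (tz diff b (deg b - 1 - n)) := by
  unfold dmap
  rw [degC_single]
  have h := dmapAux_atom hADC α b (deg b - n) (by omega) (by omega)
  rw [show deg b - (deg b - n) = n by omega, show deg b - n - 1 = deg b - 1 - n by omega] at h
  exact h

theorem dmap_atom_self {deg : B → ℕ} {diff : B → B →₀ ℤ} (α : Bool) {b : B} {n : ℕ}
    (hn : deg b ≤ n) :
    dmap deg diff α n (Finsupp.single b 1) = Finsupp.single b 1 := by
  unfold dmap
  rw [degC_single, show deg b - n = 0 by omega]
  rfl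

theorem support_pPart_subset (α : Bool) (z : B →₀ ℤ) {y : B}
    (hy : y ∈ (pPart α z).support) : y ∈ z.support := by
  rw [Finsupp.mem_support_iff] at hy ⊢
  intro h0
  apply hy
  rw [pPart]
  cases α <;> simp [h0]

/-- mass of a chain, as an integer -/
noncomputable def massZ (u : B →₀ ℕ) : ℤ := pairL (fun _ => 1) (toInt u)

theorem massZ_eq (u : B →₀ ℕ) : massZ u = ∑ y ∈ u.support, (u y : ℤ) := by
  rw [massZ, pairL_apply, Finsupp.sum]
  have : (toInt u).support = u.support := by
    ext y; exact mem_support_toInt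
  rw [this]
  refine Finset.sum_congr rfl fun y _ => ?_
  simp

theorem toInt_single (q : B) : toInt (Finsupp.single q 1) = Finsupp.single q (1:ℤ) := by
  ext y
  rw [toInt_apply]
  rcases eq_or_ne y q with rfl | h
  · simp
  · rw [Finsupp.single_eq_of_ne' (Ne.symm h), Finsupp.single_eq_of_ne' (Ne.symm h)]
    rfl

theorem augC_single (aug : B → ℤ) (y : B) :
    augC aug (Finsupp.single y 1) = aug y := by
  rw [augC, Finsupp.sum_single_index (by simp)]
  simp

theorem aug_one_of_deg_zero {deg : B → ℕ} {diff : B → B →₀ ℤ} {aug : B → ℤ}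
    (hU : Unitary deg diff aug) {y : B} (hy : deg y = 0) : aug y = 1 := by
  have h := hU y true
  rw [dmap_atom_self true (by omega), augC_single] at h
  exact h

theorem augC_eq_massZ {deg : B → ℕ} {aug : B → ℤ} {u : B →₀ ℕ}
    (hdeg : ∀ y ∈ u.support, deg y = 0) (haug : ∀ y, deg y = 0 → aug y = 1) :
    augC aug u = massZ u := by
  rw [augC_eq_pairL, massZ, pairL_apply, pairL_apply]
  refine Finsupp.sum_congr fun y hy => ?_
  rw [mem_support_toInt] at hy
  rw [haug y (hdeg y hy)]

theorem single_of_massZ_one {u : B →₀ ℕ} (h : massZ u = 1) :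
    ∃ q, u = Finsupp.single q 1 := by
  rw [massZ_eq] at h
  have hcard : (u.support.card : ℤ) ≤ 1 := by
    rw [← h]
    calc (u.support.card : ℤ) = ∑ _y ∈ u.support, (1:ℤ) := by
          rw [Finset.sum_const]
          simp
      _ ≤ ∑ y ∈ u.support, (u y : ℤ) := by
          refine Finset.sum_le_sum fun y hy => ?_
          have := Finsupp.mem_support_iff.mp hy
          omega
  have hcard' : u.support.card ≤ 1 := by exact_mod_cast hcard
  interval_cases hc : u.support.card
  · rw [Finset.card_eq_zero] at hc
    rw [Finsupp.support_eq_empty] at hc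
    rw [hc] at h
    simp at h
  · rw [Finset.card_eq_one] at hc
    obtain ⟨q, hq⟩ := hc
    rw [hq, Finset.sum_singleton] at h
    refine ⟨q, ?_⟩
    ext y
    rcases eq_or_ne y q with rfl | hne
    · rw [Finsupp.single_eq_same]
      exact_mod_cast h
    · rw [Finsupp.single_eq_of_ne' (Ne.symm hne)]
      have : y ∉ u.support := by rw [hq, Finset.mem_singleton]; exact hne
      exact Finsupp.notMem_support_iff.mp this

/-- every atom flows down to a single point -/
theorem flow_single {deg : B → ℕ} {diff : B → B →₀ ℤ} {aug : B → ℤ}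
    (hADC : IsADC deg diff aug) (hU : Unitary deg diff aug) (b : B) (α : Bool) :
    ∃ pt, dmap deg diff α 0 (Finsupp.single b 1) = Finsupp.single pt 1 ∧ deg pt = 0 := by
  rcases Nat.eq_zero_or_pos (deg b) with h0 | h0
  · exact ⟨b, dmap_atom_self α (by omega), h0⟩
  · have hflow := dmap_atom hADC α (b := b) (n := 0) (by omega)
    have hdeg0 : ∀ y ∈ (dmap deg diff α 0 (Finsupp.single b 1)).support, deg y = 0 := by
      intro y hy
      rw [hflow] at hy
      have hy' := support_pPart_subset α _ hy
      have := tz_purity hADC b (deg b - 1 - 0) (by omega) y hy'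
      omega
    have hmass : massZ (dmap deg diff α 0 (Finsupp.single b 1)) = 1 := by
      rw [← augC_eq_massZ hdeg0 (fun y hy => aug_one_of_deg_zero hU hy)]
      exact hU b α
    obtain ⟨pt, hpt⟩ := single_of_massZ_one hmass
    refine ⟨pt, hpt, ?_⟩
    refine hdeg0 pt ?_
    rw [hpt]
    rw [Finsupp.support_single_ne_zero pt one_ne_zero]
    exact Finset.mem_singleton_self pt

/-- structure of one-dimensional basis elements: a single source and a single target -/
theorem edge_struct {deg : B → ℕ} {diff : B → B →₀ ℤ} {aug : B → ℤ}
    (hADC : IsADC deg diff aug) (hU : Unitary deg diff aug) {x : B} (hx : deg x = 1) :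
    ∃ p q, negPart (diff x) = Finsupp.single p 1 ∧ posPart (diff x) = Finsupp.single q 1
      ∧ p ≠ q ∧ deg p = 0 ∧ deg q = 0 ∧ diff x = Finsupp.single q 1 - Finsupp.single p 1 := by
  obtain ⟨q, hq, hdq⟩ := flow_single hADC hU x true
  obtain ⟨p, hp, hdp⟩ := flow_single hADC hU x false
  rw [dmap_atom hADC true (by omega), show deg x - 1 - 0 = 0 by omega] at hq
  rw [dmap_atom hADC false (by omega), show deg x - 1 - 0 = 0 by omega] at hp
  rw [pPart] at hq hp
  simp only [if_true, Bool.false_eq_true, if_false] at hq hp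
  have htz : tz diff x 0 = diff x := rfl
  rw [htz] at hq hp
  have hpq : p ≠ q := by
    intro h
    subst h
    have h1 : p ∈ (posPart (diff x)).support := by
      rw [hq, Finsupp.support_single_ne_zero p one_ne_zero]; exact Finset.mem_singleton_self p
    have h2 : p ∈ (negPart (diff x)).support := by
      rw [hp, Finsupp.support_single_ne_zero p one_ne_zero]; exact Finset.mem_singleton_self p
    rw [mem_support_posPart] at h1
    rw [mem_support_negPart] at h2
    omega
  refine ⟨p, q, hp, hq, hpq, hdp, hdq, ?_⟩
  have := toInt_posPart_sub_negPart (diff x)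
  rw [hq, hp, toInt_single, toInt_single] at this
  exact this.symm

theorem mem_support_homog {deg : B → ℕ} {k : ℕ} {a : B →₀ ℕ} {x : B}
    (hx : x ∈ (homog deg k a).support) : deg x = k := by
  rw [Finsupp.mem_support_iff, homog_apply] at hx
  by_cases h : deg x = k
  · exact h
  · rw [if_neg h] at hx; exact absurd rfl hx

/-- The flow lemma: a certificate gives a lower bound on the augmentation of the flow. -/
theorem flow_lemma {deg : B → ℕ} {diff : B → B →₀ ℤ} {aug : B → ℤ}
    (hADC : IsADC deg diff aug) (haug : ∀ y, deg y = 0 → aug y = 1)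
    (ψ : B → ℤ) (D0 : ℕ)
    (hpos : ∀ y, 0 ≤ ψ y) (hone : ∀ y, deg y = 0 → ψ y ≤ 1)
    (hcert : ∀ x, 1 ≤ deg x → deg x ≤ D0 → ψ x ≤ pairL ψ (diff x)) :
    ∀ (a : B →₀ ℕ), degC deg a ≤ D0 →
      pairL ψ (toInt a) ≤ augC aug (dmap deg diff true 0 a) := by
  suffices H : ∀ (N : ℕ) (a : B →₀ ℕ), degC deg a = N → degC deg a ≤ D0 →
      pairL ψ (toInt a) ≤ augC aug (dmap deg diff true 0 a) by
    intro a ha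
    exact H (degC deg a) a rfl ha
  intro N
  induction N using Nat.strong_induction_on with
  | _ N ih =>
    intro a hNa ha
    rcases Nat.eq_zero_or_pos N with rfl | hN1
    · -- base case: degree 0
      have hid : dmap deg diff true 0 a = a := by
        unfold dmap
        rw [hNa]
        rfl
      rw [hid, augC_eq_pairL, pairL_apply, pairL_apply]
      rw [Finsupp.sum, Finsupp.sum]
      refine Finset.sum_le_sum fun y hy => ?_
      rw [mem_support_toInt] at hy
      have hdy : deg y = 0 := by
        have := deg_le_degC (deg := deg) hy
        omega
      have h1 : ψ y ≤ 1 := hone y hdy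
      have h2 : aug y = 1 := haug y hdy
      rw [h2]
      have h3 : (0:ℤ) ≤ toInt a y := by simp
      exact mul_le_mul_of_nonneg_left (by omega) h3
    · -- inductive step
      set t := homog deg N a with ht
      set r := trunc deg (N-1) a with hr
      have hsplit : t + r = a := homog_add_trunc (by omega) (by omega)
      set a' := dstep deg diff true (N-1) a with ha'
      have ha'eq : a' = posPart (bdry diff t) + r := by
        rw [ha', dstep, bdryP, if_pos rfl, show N - 1 + 1 = N by omega]
      have hdegCa' : degC deg a' ≤ N - 1 := degC_dstep_le hADC true (N-1) a
      -- (1) the flows agree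
      have hflow : dmap deg diff true 0 a = dmap deg diff true 0 a' := by
        have h1 : dmap deg diff true 0 a = dmapAux deg diff true 0 (N-1) a' := by
          unfold dmap
          rw [hNa, Nat.sub_zero, show N = (N-1) + 1 by omega, dmapAux_succ_right]
          rw [Nat.zero_add, ha', Nat.add_sub_cancel]
        have h2 : dmap deg diff true 0 a' = dmapAux deg diff true 0 (N-1) a' := by
          unfold dmap
          rw [Nat.sub_zero]
          exact (dmapAux_pad (le_refl _) hdegCa').symm
        rw [h1, h2]
      -- (3) pairing grows
      have hpair : pairL ψ (toInt a) ≤ pairL ψ (toInt a') := by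
        rw [← hsplit, ha'eq, toInt_add, toInt_add, map_add, map_add]
        have hkey : pairL ψ (toInt t) ≤ pairL ψ (toInt (posPart (bdry diff t))) := by
          refine le_trans ?_ (pairL_posPart_ge hpos _)
          rw [bdry_eq_bdryL, pairL_bdryL, pairL_apply, pairL_apply]
          rw [Finsupp.sum, Finsupp.sum]
          refine Finset.sum_le_sum fun x hx => ?_
          rw [mem_support_toInt] at hx
          have hdx : deg x = N := mem_support_homog hx
          have h3 : (0:ℤ) ≤ toInt t x := by simp
          exact mul_le_mul_of_nonneg_left (hcert x (by omega) (by omega)) h3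
        omega
      refine le_trans hpair ?_
      rw [hflow]
      exact ih (degC deg a') (by omega) a' rfl (by omega)

theorem pairL_congr_support {f g : B → ℤ} {z : B →₀ ℤ}
    (h : ∀ y ∈ z.support, f y = g y) : pairL f z = pairL g z := by
  rw [pairL_apply, pairL_apply]
  exact Finsupp.sum_congr fun y hy => by rw [h y hy]

theorem pairL_add_fun (f g : B → ℤ) (z : B →₀ ℤ) :
    pairL (fun y => f y + g y) z = pairL f z + pairL g z := by
  rw [pairL_apply, pairL_apply, pairL_apply, ← Finsupp.sum_add]
  exact Finsupp.sum_congr fun y _ => by ring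

theorem pairL_zero_fun (z : B →₀ ℤ) : pairL (fun _ => (0:ℤ)) z = 0 := by
  rw [pairL_apply, Finsupp.sum]
  exact Finset.sum_eq_zero fun y _ => by ring

theorem pairL_eq_zero_of_support {f : B → ℤ} {z : B →₀ ℤ}
    (h : ∀ y ∈ z.support, f y = 0) : pairL f z = 0 := by
  rw [pairL_apply, Finsupp.sum]
  refine Finset.sum_eq_zero fun y hy => by rw [h y hy, mul_zero]

theorem pairL_le_fun {f g : B → ℤ} (u : B →₀ ℕ)
    (h : ∀ y ∈ u.support, f y ≤ g y) :
    pairL f (toInt u) ≤ pairL g (toInt u) := by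
  rw [pairL_apply, pairL_apply, Finsupp.sum, Finsupp.sum]
  refine Finset.sum_le_sum fun y hy => ?_
  rw [mem_support_toInt] at hy
  have h3 : (0:ℤ) ≤ toInt u y := by simp
  exact mul_le_mul_of_nonneg_left (h y hy) h3

theorem bdryL_apply_coord (diff : B → B →₀ ℤ) (z : B →₀ ℤ) (y : B) :
    (bdryL diff z) y = z.sum fun x k => k * (diff x y) := by
  rw [bdryL_apply, Finsupp.sum_apply]
  exact Finsupp.sum_congr fun x _ => by rw [Finsupp.smul_apply, smul_eq_mul]

/-- mass of a chain as a natural number -/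
noncomputable def massN (u : B →₀ ℕ) : ℕ := u.sum fun _ k => k

theorem massN_add (u v : B →₀ ℕ) : massN (u + v) = massN u + massN v := by
  rw [massN, massN, massN]
  exact Finsupp.sum_add_index' (fun _ => rfl) (fun _ _ _ => rfl)

theorem massN_single (x : B) : massN (Finsupp.single x 1) = 1 := by
  rw [massN, Finsupp.sum_single_index rfl]

theorem massN_sub_single {u : B →₀ ℕ} {x : B} (hx : 1 ≤ u x) :
    massN (u - Finsupp.single x 1) + 1 = massN u := by
  have key : (u - Finsupp.single x 1) + Finsupp.single x 1 = u := by
    ext y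
    rw [Finsupp.add_apply, Finsupp.tsub_apply]
    rcases eq_or_ne y x with rfl | h
    · rw [Finsupp.single_eq_same]; omega
    · rw [Finsupp.single_eq_of_ne' (Ne.symm h)]; omega
  conv_rhs => rw [← key]
  rw [massN_add, massN_single]

theorem toInt_sub_single {u : B →₀ ℕ} {x : B} (hx : 1 ≤ u x) :
    toInt (u - Finsupp.single x 1) = toInt u - Finsupp.single x (1:ℤ) := by
  ext y
  rw [Finsupp.sub_apply, toInt_apply, Finsupp.tsub_apply]
  rcases eq_or_ne y x with rfl | h
  · rw [Finsupp.single_eq_same, Finsupp.single_eq_same, toInt_apply]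
    omega
  · rw [Finsupp.single_eq_of_ne' (Ne.symm h), Finsupp.single_eq_of_ne' (Ne.symm h), toInt_apply]
    omega

theorem support_sub_single {u : B →₀ ℕ} {x : B} {y : B}
    (hy : y ∈ (u - Finsupp.single x 1).support) : y ∈ u.support := by
  rw [Finsupp.mem_support_iff] at hy ⊢
  rw [Finsupp.tsub_apply] at hy
  omega

/-- the elementary "precedes" relation on 0-cells given by 1-cells -/
def edgeR (deg : B → ℕ) (diff : B → B →₀ ℤ) (u v : B) : Prop :=
  ∃ x, deg x = 1 ∧ u ∈ (negPart (diff x)).support ∧ v ∈ (posPart (diff x)).support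

theorem rt_reverse {r s : B → B → Prop} (h : ∀ u v, r u v → Relation.ReflTransGen s v u) :
    ∀ u v, Relation.ReflTransGen r u v → Relation.ReflTransGen s v u := by
  intro u v huv
  induction huv with
  | refl => exact Relation.ReflTransGen.refl
  | tail _ hstep ih => exact Relation.ReflTransGen.trans (h _ _ hstep) ih

/-- a positive 1-chain with boundary `q - p` provides an `edgeR`-path from `p` to `q` -/
theorem path_lemma {deg : B → ℕ} {diff : B → B →₀ ℤ} {aug : B → ℤ}
    (hADC : IsADC deg diff aug) (hU : Unitary deg diff aug) :
    ∀ (N : ℕ) (u : B →₀ ℕ), massN u = N → (∀ x ∈ u.support, deg x = 1) →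
    ∀ p q : B, p ≠ q →
    bdry diff u = Finsupp.single q (1:ℤ) - Finsupp.single p 1 →
    Relation.ReflTransGen (edgeR deg diff) p q := by
  intro N
  induction N using Nat.strong_induction_on with
  | _ N ih =>
    intro u hmass hdeg p q hpq hbdry
    -- the boundary evaluated at p is -1 < 0
    have hp : (bdry diff u) p = -1 := by
      rw [hbdry, Finsupp.sub_apply, Finsupp.single_eq_of_ne' (Ne.symm hpq),
        Finsupp.single_eq_same]
      ring
    -- find an element of u whose differential is negative at p
    have hex : ∃ x ∈ u.support, (diff x) p < 0 := by
      by_contra hc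
      push_neg at hc
      have : 0 ≤ (bdry diff u) p := by
        rw [bdry_eq_bdryL, bdryL_apply_coord, Finsupp.sum]
        refine Finset.sum_nonneg fun x hx => ?_
        rw [mem_support_toInt] at hx
        have h1 := hc x hx
        have h2 : (0:ℤ) ≤ toInt u x := by simp
        exact mul_nonneg h2 h1
      omega
    obtain ⟨x, hxu, hxp⟩ := hex
    have hux : 1 ≤ u x := by
      have := Finsupp.mem_support_iff.mp hxu
      omega
    obtain ⟨px, qx, hpx, hqx, hpqx, hdpx, hdqx, hdiffx⟩ :=
      edge_struct hADC hU (hdeg x hxu)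
    -- p = px
    have hppx : p = px := by
      have h1 : p ∈ (negPart (diff x)).support := mem_support_negPart.mpr hxp
      rw [hpx, Finsupp.support_single_ne_zero px one_ne_zero, Finset.mem_singleton] at h1
      exact h1
    subst hppx
    have hstep : edgeR deg diff p qx := by
      refine ⟨x, hdeg x hxu, ?_, ?_⟩
      · rw [hpx, Finsupp.support_single_ne_zero p one_ne_zero]
        exact Finset.mem_singleton_self p
      · rw [hqx, Finsupp.support_single_ne_zero qx one_ne_zero]
        exact Finset.mem_singleton_self qx
    rcases eq_or_ne qx q with rfl | hqxq
    · exact Relation.ReflTransGen.single hstep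
    · -- recurse on u - single x 1
      set u' := u - Finsupp.single x 1 with hu'
      have hmass' : massN u' + 1 = N := by rw [hu', massN_sub_single hux, hmass]
      have hbdry' : bdry diff u' = Finsupp.single q (1:ℤ) - Finsupp.single qx 1 := by
        rw [bdry_eq_bdryL, hu', toInt_sub_single hux, map_sub, ← bdry_eq_bdryL, hbdry]
        have hbs : bdryL diff (Finsupp.single x (1:ℤ)) = diff x := by
          rw [bdryL, Finsupp.lsum_single, LinearMap.toSpanSingleton_apply, one_smul]
        rw [hbs, hdiffx]
        abel
      have hrec := ih (massN u') (by omega) u' rfl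
        (fun y hy => hdeg y (support_sub_single hy)) qx q hqxq hbdry'
      exact Relation.ReflTransGen.head hstep hrec

/-- A certificate stack at level `n` for the basis element `b`. -/
structure Stack (deg : B → ℕ) (diff : B → B →₀ ℤ) (b : B) (n : ℕ) (Ψ : B → ℤ) : Prop where
  nonneg : ∀ y, 0 ≤ Ψ y
  le_one : ∀ y, deg y = 0 → Ψ y ≤ 1
  vanish : ∀ y, n < deg y → Ψ y = 0
  cert : ∀ x, 1 ≤ deg x → deg x ≤ n → Ψ x ≤ pairL Ψ (diff x)
  coclosed : ∀ x, deg x = n + 1 → 0 ≤ pairL Ψ (diff x)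
  pos_flow : 1 ≤ pairL Ψ (toInt (posPart (tz diff b (deg b - 1 - n))))
  neg_flow : pairL Ψ (toInt (negPart (tz diff b (deg b - 1 - n)))) ≤ 0

theorem pairL_single_one (f : B → ℤ) (q : B) :
    pairL f (toInt (Finsupp.single q 1)) = f q := by
  rw [toInt_single, pairL_single, one_mul]

/-- mediated two-step relO path from an edge relation -/
theorem edge_to_relO {deg : B → ℕ} {diff : B → B →₀ ℤ} {aug : B → ℤ}
    (hADC : IsADC deg diff aug) {u v : B} (h : edgeR deg diff u v) :
    Relation.ReflTransGen (relO deg diff 0) v u := by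
  obtain ⟨x, hx1, hu, hv⟩ := h
  have hdu : deg u = 0 := by
    have h1 := hADC.diff_deg x u (by
      rw [Finsupp.mem_support_iff] at hu ⊢
      intro h0; apply hu; rw [negPart_apply, h0]; rfl)
    omega
  have hdv : deg v = 0 := by
    have h1 := hADC.diff_deg x v (by
      rw [Finsupp.mem_support_iff] at hv ⊢
      intro h0; apply hv; rw [posPart_apply, h0]; rfl)
    omega
  have hstep1 : relO deg diff 0 v x := by
    refine ⟨Nat.zero_le _, Nat.zero_le _, ?_⟩
    rw [Finset.not_disjoint_iff]
    refine ⟨v, ?_, ?_⟩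
    · rw [dmap_atom_self false (le_of_eq hdv), Finsupp.support_single_ne_zero v one_ne_zero]
      exact Finset.mem_singleton_self v
    · rw [dmap_atom hADC true (by omega), show deg x - 1 - 0 = 0 by omega]
      exact hv
  have hstep2 : relO deg diff 0 x u := by
    refine ⟨Nat.zero_le _, Nat.zero_le _, ?_⟩
    rw [Finset.not_disjoint_iff]
    refine ⟨u, ?_, ?_⟩
    · rw [dmap_atom hADC false (by omega), show deg x - 1 - 0 = 0 by omega]
      exact hu
    · rw [dmap_atom_self true (le_of_eq hdu), Finsupp.support_single_ne_zero u one_ne_zero]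
      exact Finset.mem_singleton_self u
  exact Relation.ReflTransGen.head hstep1 (Relation.ReflTransGen.single hstep2)

/-- base case of the certificate stack construction -/
theorem stack_zero {deg : B → ℕ} {diff : B → B →₀ ℤ} {aug : B → ℤ}
    (hADC : IsADC deg diff aug) (hU : Unitary deg diff aug) (hLF : LoopFree deg diff)
    {b : B} (hd : 1 ≤ deg b) : ∃ Ψ, Stack deg diff b 0 Ψ := by
  obtain ⟨qh, hq, hdq⟩ := flow_single hADC hU b true
  obtain ⟨ph, hp, hdp⟩ := flow_single hADC hU b false
  rw [dmap_atom hADC true (by omega)] at hq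
  rw [dmap_atom hADC false (by omega)] at hp
  rw [pPart] at hq hp
  simp only [if_true, Bool.false_eq_true, if_false] at hq hp
  -- ph ≠ qh
  have hpqh : ph ≠ qh := by
    intro h
    subst h
    have h1 : ph ∈ (posPart (tz diff b (deg b - 1 - 0))).support := by
      rw [hq, Finsupp.support_single_ne_zero ph one_ne_zero]
      exact Finset.mem_singleton_self ph
    have h2 : ph ∈ (negPart (tz diff b (deg b - 1 - 0))).support := by
      rw [hp, Finsupp.support_single_ne_zero ph one_ne_zero]
      exact Finset.mem_singleton_self ph
    rw [mem_support_posPart] at h1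
    rw [mem_support_negPart] at h2
    omega
  classical
  refine ⟨fun y => if deg y = 0 ∧ Relation.ReflTransGen (edgeR deg diff) qh y then 1 else 0,
    ?_, ?_, ?_, ?_, ?_, ?_, ?_⟩
  · intro y; split <;> omega
  · intro y _; split <;> omega
  · intro y hy
    rw [if_neg]
    rintro ⟨h0, -⟩
    omega
  · intro x h1 h2; omega
  · -- coclosed
    intro x hx
    rw [Nat.zero_add] at hx
    obtain ⟨px, qx, hpx, hqx, hpqx, hdpx, hdqx, hdiffx⟩ := edge_struct hADC hU hx
    rw [hdiffx, map_sub, pairL_single, pairL_single, one_mul, one_mul]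
    by_cases hcase : deg px = 0 ∧ Relation.ReflTransGen (edgeR deg diff) qh px
    · rw [if_pos hcase, if_pos]
      · omega
      refine ⟨hdqx, Relation.ReflTransGen.tail hcase.2 ?_⟩
      refine ⟨x, hx, ?_, ?_⟩
      · rw [hpx, Finsupp.support_single_ne_zero px one_ne_zero]
        exact Finset.mem_singleton_self px
      · rw [hqx, Finsupp.support_single_ne_zero qx one_ne_zero]
        exact Finset.mem_singleton_self qx
    · rw [if_neg hcase]
      split <;> omega
  · -- pos_flow
    rw [hq, pairL_single_one, if_pos ⟨hdq, Relation.ReflTransGen.refl⟩]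
  · -- neg_flow
    rw [hp, pairL_single_one]
    rw [if_neg]
    rintro ⟨-, hreach⟩
    -- we derive a contradiction with loop-freeness
    have hback : Relation.ReflTransGen (edgeR deg diff) ph qh := by
      rcases Nat.lt_or_ge (deg b) 2 with hlt | hge
      · -- deg b = 1 : single step through b itself
        have hdb : deg b = 1 := by omega
        refine Relation.ReflTransGen.single ⟨b, hdb, ?_, ?_⟩
        · rw [show tz diff b (deg b - 1 - 0) = diff b by
              rw [show deg b - 1 - 0 = 0 by omega]; rfl] at hp
          rw [hp, Finsupp.support_single_ne_zero ph one_ne_zero]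
          exact Finset.mem_singleton_self ph
        · rw [show tz diff b (deg b - 1 - 0) = diff b by
              rw [show deg b - 1 - 0 = 0 by omega]; rfl] at hq
          rw [hq, Finsupp.support_single_ne_zero qh one_ne_zero]
          exact Finset.mem_singleton_self qh
      · -- deg b ≥ 2 : path lemma on posPart (tz diff b (deg b - 2))
        set u := posPart (tz diff b (deg b - 2)) with hu
        have hdegu : ∀ x ∈ u.support, deg x = 1 := by
          intro x hxu
          have hx' : x ∈ (tz diff b (deg b - 2)).support := by
            rw [Finsupp.mem_support_iff] at hxu ⊢
            intro h0; apply hxu; rw [hu, posPart_apply, h0]; rfl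
          have := tz_purity hADC b (deg b - 2) (by omega) x hx'
          omega
        have hbdryu : bdry diff u = Finsupp.single qh (1:ℤ) - Finsupp.single ph 1 := by
          have h1 : bdry diff u = tz diff b (deg b - 1) := by
            rw [hu, show deg b - 1 = (deg b - 2) + 1 by omega]
            rfl
          have h2 : tz diff b (deg b - 1) =
              toInt (posPart (tz diff b (deg b - 1))) -
                toInt (negPart (tz diff b (deg b - 1))) :=
            (toInt_posPart_sub_negPart _).symm
          rw [h1, h2, show deg b - 1 = deg b - 1 - 0 by omega, hq, hp,
            toInt_single, toInt_single]
        exact path_lemma hADC hU (massN u) u rfl hdegu ph qh hpqh hbdryu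
    have hfwd := rt_reverse (fun u v h => edge_to_relO hADC h) qh ph hreach
    have hbwd := rt_reverse (fun u v h => edge_to_relO hADC h) ph qh hback
    exact hpqh (hLF 0 ph qh hfwd hbwd)

theorem pairL_sub_fun (f g : B → ℤ) (z : B →₀ ℤ) :
    pairL (fun y => f y - g y) z = pairL f z - pairL g z := by
  rw [pairL_apply, pairL_apply, pairL_apply, ← Finsupp.sum_sub]
  exact Finsupp.sum_congr fun y _ => by ring

/-- the inductive step of the certificate stack construction -/
theorem stack_succ {deg : B → ℕ} {diff : B → B →₀ ℤ} {aug : B → ℤ}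
    (hADC : IsADC deg diff aug) (hU : Unitary deg diff aug) (hLF : LoopFree deg diff)
    {b : B} {n : ℕ} {Ψ : B → ℤ} (hn : n + 1 ≤ deg b - 1) (hd : 1 ≤ deg b)
    (hS : Stack deg diff b n Ψ) : ∃ Ψ', Stack deg diff b (n+1) Ψ' := by
  classical
  set d := deg b with hdd
  set j : ℕ := d - 1 - (n+1) with hj
  have hj1 : d - 1 - n = j + 1 := by omega
  set sN := negPart (tz diff b j) with hsN
  set tN := posPart (tz diff b j) with htN
  -- purity at level n+1
  have fact0 : ∀ y ∈ (tz diff b j).support, deg y = n + 1 := by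
    intro y hy
    have := tz_purity hADC b j (by omega) y hy
    omega
  have hsupp_s : ∀ y ∈ sN.support, y ∈ (tz diff b j).support := by
    intro y hy
    rw [hsN, mem_support_negPart] at hy
    rw [Finsupp.mem_support_iff]
    omega
  have hsupp_t : ∀ y ∈ tN.support, y ∈ (tz diff b j).support := by
    intro y hy
    rw [htN, mem_support_posPart] at hy
    rw [Finsupp.mem_support_iff]
    omega
  set h : B → ℤ := fun x => pairL Ψ (diff x) with hh
  set R : B → B → Prop := fun x' x => deg x' = n+2 ∧ deg x = n+2 ∧
    ∃ y, y ∈ (posPart (diff x')).support ∧ y ∈ (negPart (diff x)).support with hR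
  set Bad : B → Prop := fun x => deg x = n+2 ∧ ∃ x₀, Relation.ReflTransGen R x x₀ ∧
    deg x₀ = n+2 ∧ ∃ y₀, y₀ ∈ (posPart (diff x₀)).support ∧ y₀ ∈ sN.support with hBad
  set Y : B → Prop := fun y => y ∈ sN.support ∨
    ∃ x, Bad x ∧ y ∈ (negPart (diff x)).support with hY
  -- dmap computations for atoms of degree n+2
  have hdmap_neg : ∀ x : B, deg x = n + 2 →
      dmap deg diff false (n+1) (Finsupp.single x 1) = negPart (diff x) := by
    intro x hx
    rw [dmap_atom hADC false (by omega), show deg x - 1 - (n+1) = 0 by omega]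
    rfl
  have hdmap_pos : ∀ x : B, deg x = n + 2 →
      dmap deg diff true (n+1) (Finsupp.single x 1) = posPart (diff x) := by
    intro x hx
    rw [dmap_atom hADC true (by omega), show deg x - 1 - (n+1) = 0 by omega]
    rfl
  have hdmap_b_pos : dmap deg diff true (n+1) (Finsupp.single b 1) = tN := by
    rw [dmap_atom hADC true (by omega), htN, ← hj]
    rfl
  have hdmap_b_neg : dmap deg diff false (n+1) (Finsupp.single b 1) = sN := by
    rw [dmap_atom hADC false (by omega), hsN, ← hj]
    rfl
  -- Key disjointness: the target flow avoids the bad set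
  have hKey : ∀ y ∈ tN.support, ¬ Y y := by
    intro y hyt hYy
    have hyt' := hsupp_t y hyt
    rcases hYy with hys | ⟨x, hBadx, hyx⟩
    · have h1 := mem_support_posPart.mp (htN ▸ hyt)
      have h2 := mem_support_negPart.mp (hsN ▸ hys)
      omega
    · obtain ⟨hdx, x₀, hRT, hdx₀, y₀, hy₀p, hy₀s⟩ := hBadx
      have hxb : relO deg diff (n+1) x b := by
        refine ⟨by omega, by omega, ?_⟩
        rw [Finset.not_disjoint_iff]
        exact ⟨y, by rw [hdmap_neg x hdx]; exact hyx, by rw [hdmap_b_pos]; exact hyt⟩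
      have hbx₀ : relO deg diff (n+1) b x₀ := by
        refine ⟨by omega, by omega, ?_⟩
        rw [Finset.not_disjoint_iff]
        exact ⟨y₀, by rw [hdmap_b_neg]; exact hy₀s, by rw [hdmap_pos x₀ hdx₀]; exact hy₀p⟩
      have hR2relO : ∀ c c', R c c' → relO deg diff (n+1) c' c := by
        rintro c c' ⟨hc, hc', y', hy'p, hy'n⟩
        refine ⟨by omega, by omega, ?_⟩
        rw [Finset.not_disjoint_iff]
        exact ⟨y', by rw [hdmap_neg c' hc']; exact hy'n, by rw [hdmap_pos c hc]; exact hy'p⟩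
      have hx₀x : Relation.ReflTransGen (relO deg diff (n+1)) x₀ x :=
        rt_reverse (fun u v huv => Relation.ReflTransGen.single (hR2relO u v huv)) x x₀ hRT
      have hbxpath : Relation.ReflTransGen (relO deg diff (n+1)) b x :=
        Relation.ReflTransGen.head hbx₀ hx₀x
      have hxeqb : x = b := hLF (n+1) x b (Relation.ReflTransGen.single hxb) hbxpath
      subst hxeqb
      have hj0 : j = 0 := by omega
      have h2 := mem_support_negPart.mp hyx
      rw [htN, hj0] at hyt
      have h1 := mem_support_posPart.mp hyt
      have htz0 : tz diff x 0 = diff x := rfl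
      rw [htz0] at h1
      omega
  -- the correction function and the new stack
  set g : B → ℤ := fun y => if deg y = n+1 ∧ ¬ Y y then h y else 0 with hg
  set gY : B → ℤ := fun y => if deg y = n+1 ∧ Y y then h y else 0 with hgY
  have hcocl : ∀ y, deg y = n + 1 → 0 ≤ h y := fun y hy => hS.coclosed y hy
  have hgnn : ∀ y, 0 ≤ g y := by
    intro y
    simp only [hg]
    split
    · next hc => exact hcocl y hc.1
    · exact le_refl 0
  have hgYnn : ∀ y, 0 ≤ gY y := by
    intro y
    simp only [hgY]
    split
    · next hc => exact hcocl y hc.1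
    · exact le_refl 0
  -- pairL of h equals pairL Ψ of the boundary
  have hpairh : ∀ z : B →₀ ℤ, pairL h z = pairL Ψ (bdryL diff z) := by
    intro z
    rw [pairL_bdryL]
  -- on a chain supported in degree n+1, g = h - gY
  have hsplit_g : ∀ z : B →₀ ℤ, (∀ y ∈ z.support, deg y = n + 1) →
      pairL g z = pairL h z - pairL gY z := by
    intro z hz
    have : pairL g z = pairL (fun y => h y - gY y) z := by
      refine pairL_congr_support fun y hy => ?_
      have hdy := hz y hy
      simp only [hg, hgY]
      by_cases hYy : Y y
      · rw [if_neg (fun hc => hc.2 hYy : ¬(deg y = n+1 ∧ ¬ Y y)), if_pos ⟨hdy, hYy⟩]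
        ring
      · rw [if_pos ⟨hdy, hYy⟩, if_neg (fun hc => hYy hc.2 : ¬(deg y = n+1 ∧ Y y))]
        ring
    rw [this, pairL_sub_fun]
  -- vanishing of Ψ in degree n+1
  have hvan1 : ∀ z : B →₀ ℤ, (∀ y ∈ z.support, deg y = n + 1) → pairL Ψ z = 0 := by
    intro z hz
    exact pairL_eq_zero_of_support fun y hy => hS.vanish y (by have := hz y hy; omega)
  have hdiffsupp : ∀ x : B, deg x = n + 2 → ∀ y ∈ (diff x).support, deg y = n + 1 := by
    intro x hx y hy
    have := hADC.diff_deg x y hy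
    omega
  refine ⟨fun y => Ψ y + g y, ?_, ?_, ?_, ?_, ?_, ?_, ?_⟩
  · intro y
    have := hS.nonneg y
    have := hgnn y
    omega
  · intro y hy
    have hg0 : g y = 0 := by simp only [hg]; exact if_neg (by rintro ⟨hc, -⟩; omega)
    rw [hg0, add_zero]
    exact hS.le_one y hy
  · intro y hy
    have hg0 : g y = 0 := by simp only [hg]; exact if_neg (by rintro ⟨hc, -⟩; omega)
    have := hS.vanish y (by omega)
    omega
  · -- cert
    intro x hx1 hx2
    have hpair' : pairL (fun y => Ψ y + g y) (diff x) = pairL Ψ (diff x) := by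
      rw [pairL_add_fun]
      have : pairL g (diff x) = 0 := by
        refine pairL_eq_zero_of_support fun y hy => ?_
        have := hADC.diff_deg x y hy
        simp only [hg]
        exact if_neg (by rintro ⟨hc, -⟩; omega)
      omega
    rw [hpair']
    rcases Nat.lt_or_ge (deg x) (n+1) with hlt | hge
    · have hg0 : g x = 0 := by simp only [hg]; exact if_neg (by rintro ⟨hc, -⟩; omega)
      rw [hg0, add_zero]
      exact hS.cert x hx1 (by omega)
    · have hdx : deg x = n + 1 := by omega
      have hΨ0 : Ψ x = 0 := hS.vanish x (by omega)
      rw [hΨ0, zero_add]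
      simp only [hg]
      split
      · exact le_refl _
      · exact hcocl x hdx
  · -- coclosed at level n+2
    intro x hx
    rw [pairL_add_fun]
    have h0 : pairL Ψ (diff x) = 0 := hvan1 _ (hdiffsupp x hx)
    rw [h0, zero_add]
    rw [hsplit_g _ (hdiffsupp x hx)]
    have hbdry0 : pairL h (diff x) = 0 := by
      rw [hpairh, bdryL_diff_eq_zero hADC, map_zero]
    rw [hbdry0, zero_sub, neg_nonneg]
    -- split diff x into positive and negative parts
    have hsplitx : pairL gY (diff x) =
        pairL gY (toInt (posPart (diff x))) - pairL gY (toInt (negPart (diff x))) := by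
      conv_lhs => rw [← toInt_posPart_sub_negPart (diff x)]
      rw [map_sub]
    by_cases hcase : ∀ y ∈ (posPart (diff x)).support, gY y = 0
    · have hzero : pairL gY (toInt (posPart (diff x))) = 0 := by
        refine pairL_eq_zero_of_support fun y hy => ?_
        rw [mem_support_toInt] at hy
        exact hcase y hy
      rw [hsplitx, hzero, zero_sub]
      have := pairL_nonneg hgYnn (negPart (diff x))
      omega
    · push_neg at hcase
      obtain ⟨y1, hy1pos, hy1ne⟩ := hcase
      have hy1Y : deg y1 = n + 1 ∧ Y y1 := by
        by_contra hc
        exact hy1ne (by simp only [hgY]; exact if_neg hc)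
      -- x is bad
      have hBadx : Bad x := by
        rcases hy1Y.2 with hys | ⟨x', hBadx', hy1n⟩
        · exact ⟨hx, x, Relation.ReflTransGen.refl, hx, y1, hy1pos, hys⟩
        · obtain ⟨hdx', x₀, hRT', hdx₀, y₀, hy₀p, hy₀s⟩ := hBadx'
          refine ⟨hx, x₀, ?_, hdx₀, y₀, hy₀p, hy₀s⟩
          exact Relation.ReflTransGen.head ⟨hx, hdx', y1, hy1pos, hy1n⟩ hRT'
      -- on the negative part, gY = h
      have hnegfull : pairL gY (toInt (negPart (diff x))) =
          pairL h (toInt (negPart (diff x))) := by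
        refine pairL_congr_support fun y hy => ?_
        rw [mem_support_toInt] at hy
        have hyd : deg y = n + 1 := by
          have := hADC.diff_deg x y (by
            rw [Finsupp.mem_support_iff] at hy ⊢
            intro hc; apply hy; rw [negPart_apply, hc]; rfl)
          omega
        simp only [hgY]
        exact if_pos ⟨hyd, Or.inr ⟨x, hBadx, hy⟩⟩
      have hposle : pairL gY (toInt (posPart (diff x))) ≤
          pairL h (toInt (posPart (diff x))) := by
        refine pairL_le_fun _ fun y hy => ?_
        have hyd : deg y = n + 1 := by
          have := hADC.diff_deg x y (by
            rw [Finsupp.mem_support_iff] at hy ⊢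
            intro hc; apply hy; rw [posPart_apply, hc]; rfl)
          omega
        simp only [hgY, hh]
        split
        · exact le_refl _
        · exact hcocl y hyd
      have hhx : pairL h (toInt (posPart (diff x))) - pairL h (toInt (negPart (diff x)))
          = 0 := by
        rw [← map_sub, toInt_posPart_sub_negPart (diff x), hpairh,
          bdryL_diff_eq_zero hADC, map_zero]
      rw [hsplitx]
      omega
  · -- pos_flow at level n+1
    have hred : deg b - 1 - (n+1) = j := rfl
    rw [hred, ← htN]
    have h1 : pairL (fun y => Ψ y + g y) (toInt tN)
        = pairL Ψ (toInt tN) + pairL g (toInt tN) := pairL_add_fun _ _ _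
    have h2 : pairL Ψ (toInt tN) = 0 := by
      refine hvan1 _ fun y hy => ?_
      rw [mem_support_toInt] at hy
      exact fact0 y (hsupp_t y hy)
    have h3 : pairL g (toInt tN) = pairL h (toInt tN) := by
      refine pairL_congr_support fun y hy => ?_
      rw [mem_support_toInt] at hy
      simp only [hg]
      exact if_pos ⟨fact0 y (hsupp_t y hy), hKey y hy⟩
    have h4 : pairL h (toInt tN) = pairL Ψ (tz diff b (j+1)) := by
      rw [hpairh, ← bdry_eq_bdryL]
      have : bdry diff tN = tz diff b (j+1) := rfl
      rw [this]
    have h5 : pairL Ψ (tz diff b (j+1)) =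
        pairL Ψ (toInt (posPart (tz diff b (j+1)))) -
          pairL Ψ (toInt (negPart (tz diff b (j+1)))) := by
      conv_lhs => rw [← toInt_posPart_sub_negPart (tz diff b (j+1))]
      rw [map_sub]
    have h6 := hS.pos_flow
    have h7 := hS.neg_flow
    rw [hj1] at h6 h7
    omega
  · -- neg_flow at level n+1
    have hred : deg b - 1 - (n+1) = j := rfl
    rw [hred, ← hsN]
    have h1 : pairL (fun y => Ψ y + g y) (toInt sN)
        = pairL Ψ (toInt sN) + pairL g (toInt sN) := pairL_add_fun _ _ _
    have h2 : pairL Ψ (toInt sN) = 0 := by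
      refine hvan1 _ fun y hy => ?_
      rw [mem_support_toInt] at hy
      exact fact0 y (hsupp_s y hy)
    have h3 : pairL g (toInt sN) = 0 := by
      refine pairL_eq_zero_of_support fun y hy => ?_
      rw [mem_support_toInt] at hy
      simp only [hg]
      exact if_neg (by rintro ⟨-, hnY⟩; exact hnY (Or.inl hy))
    omega

theorem stack_exists {deg : B → ℕ} {diff : B → B →₀ ℤ} {aug : B → ℤ}
    (hADC : IsADC deg diff aug) (hU : Unitary deg diff aug) (hLF : LoopFree deg diff)
    {b : B} (hd : 1 ≤ deg b) :
    ∀ m, m ≤ deg b - 1 → ∃ Ψ, Stack deg diff b m Ψ := by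
  intro m
  induction m with
  | zero => intro _; exact stack_zero hADC hU hLF hd
  | succ m ih =>
    intro hm
    obtain ⟨Ψ, hS⟩ := ih (by omega)
    exact stack_succ hADC hU hLF hm hd hS

theorem main_bound {deg : B → ℕ} {diff : B → B →₀ ℤ} {aug : B → ℤ}
    (hADC : IsADC deg diff aug) (hU : Unitary deg diff aug) (hLF : LoopFree deg diff)
    (a : B →₀ ℕ) (b : B) :
    (a b : ℤ) ≤ augC aug (dmap deg diff true 0 a) := by
  classical
  have haug : ∀ y, deg y = 0 → aug y = 1 := fun y hy => aug_one_of_deg_zero hU hy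
  set d := deg b with hdd
  set a'' := dmap deg diff true d a with ha''
  have hcoeff : a b ≤ a'' b := coeff_le_dmap (le_refl d) a
  have hdeg'' : degC deg a'' ≤ d := by
    by_cases hc : degC deg a ≤ d
    · have heq : a'' = a := by
        rw [ha'']
        unfold dmap
        rw [show degC deg a - d = 0 by omega]
        rfl
      rw [heq]
      exact hc
    · obtain ⟨k, hk⟩ : ∃ k, degC deg a - d = k + 1 := ⟨degC deg a - d - 1, by omega⟩
      rw [ha'']
      unfold dmap
      rw [hk]
      exact degC_dstep_le hADC true d _
  have hfloweq : augC aug (dmap deg diff true 0 a'') = augC aug (dmap deg diff true 0 a) := by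
    rw [ha'', dmap_zero_comp hADC true d a]
  rcases Nat.eq_zero_or_pos d with hd0 | hd1
  · -- degree zero case
    have hsupp0 : ∀ y ∈ a''.support, deg y = 0 := by
      intro y hy
      have := deg_le_degC (deg := deg) hy
      omega
    have hflow0 : dmap deg diff true 0 a'' = a'' := by
      unfold dmap
      rw [show degC deg a'' - 0 = 0 by omega]
      rfl
    have hmassge : (a'' b : ℤ) ≤ augC aug a'' := by
      rw [augC_eq_massZ hsupp0 haug]
      calc (a'' b : ℤ) = (a'' b : ℤ) * 1 := by ring
        _ ≤ massZ a'' := single_le_pairL (fun _ => zero_le_one) a'' b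
    have heq2 : augC aug (dmap deg diff true 0 a) = augC aug a'' := by
      rw [← hfloweq, hflow0]
    rw [heq2]
    have hc2 : (a b : ℤ) ≤ (a'' b : ℤ) := by exact_mod_cast hcoeff
    omega
  · -- positive degree
    obtain ⟨Ψ, hS⟩ := stack_exists hADC hU hLF (b := b) (by omega) (d - 1) (le_refl _)
    set Ψfin : B → ℤ := fun y => Ψ y + (if y = b then 1 else 0) with hΨfin
    have hΨb : Ψ b = 0 := hS.vanish b (by omega)
    have hpos : ∀ y, 0 ≤ Ψfin y := by
      intro y
      have := hS.nonneg y
      simp only [hΨfin]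
      split <;> omega
    have hone : ∀ y, deg y = 0 → Ψfin y ≤ 1 := by
      intro y hy
      have h1 := hS.le_one y hy
      simp only [hΨfin]
      rw [if_neg (by rintro rfl; omega)]
      omega
    have hcert : ∀ x, 1 ≤ deg x → deg x ≤ d → Ψfin x ≤ pairL Ψfin (diff x) := by
      intro x hx1 hx2
      have hdiffpair : pairL Ψfin (diff x) = pairL Ψ (diff x) := by
        have : pairL Ψfin (diff x)
            = pairL Ψ (diff x) + pairL (fun y => if y = b then 1 else 0) (diff x) := by
          rw [hΨfin]
          exact pairL_add_fun _ _ _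
        rw [this]
        have hz : pairL (fun y => if y = b then (1:ℤ) else 0) (diff x) = 0 := by
          refine pairL_eq_zero_of_support fun y hy => ?_
          have := hADC.diff_deg x y hy
          rw [if_neg]
          rintro rfl
          omega
        omega
      rw [hdiffpair]
      rcases Nat.lt_or_ge (deg x) d with hlt | hge
      · have hxb : x ≠ b := by rintro rfl; omega
        simp only [hΨfin]
        rw [if_neg hxb, add_zero]
        exact hS.cert x hx1 (by omega)
      · have hdx : deg x = d := by omega
        have hΨ0 : Ψ x = 0 := hS.vanish x (by omega)
        rcases eq_or_ne x b with rfl | hxb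
        · have hfx : Ψfin x = 1 := by simp [hΨfin, hΨ0]
          rw [hfx]
          have h6 := hS.pos_flow
          have h7 := hS.neg_flow
          rw [show deg x - 1 - (d - 1) = 0 by omega] at h6 h7
          have hsp : pairL Ψ (diff x) =
              pairL Ψ (toInt (posPart (tz diff x 0))) -
                pairL Ψ (toInt (negPart (tz diff x 0))) := by
            rw [← map_sub, toInt_posPart_sub_negPart]
            rfl
          omega
        · simp only [hΨfin]
          rw [if_neg hxb, hΨ0, add_zero]
          exact hS.coclosed x (by omega)
    have hflow := flow_lemma hADC haug Ψfin d hpos hone hcert a'' hdeg''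
    have hlow : (a'' b : ℤ) * Ψfin b ≤ pairL Ψfin (toInt a'') := single_le_pairL hpos a'' b
    have hΨfinb : Ψfin b = 1 := by simp [hΨfin, hΨb]
    rw [hΨfinb, mul_one] at hlow
    have hend : (a'' b : ℤ) ≤ augC aug (dmap deg diff true 0 a) := by
      rw [← hfloweq]
      exact le_trans hlow hflow
    have hc2 : (a b : ℤ) ≤ (a'' b : ℤ) := by exact_mod_cast hcoeff
    omega

end Chains


open Chains in
/-- Every coherent chain `a` in an augmented directed complex with loop-free unitary
basis satisfies `a ≤ 1`: every basis element appears in `a` with coefficient at most 1. -/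
theorem coherent_coeff_le_one {B : Type*} [DecidableEq B]
    (deg : B → ℕ) (diff : B → B →₀ ℤ) (aug : B → ℤ)
    (hADC : IsADC deg diff aug) (hU : Unitary deg diff aug) (hLF : LoopFree deg diff)
    (a : B →₀ ℕ) (hcoh : Coherent deg diff aug a) :
    ∀ b : B, a b ≤ 1 := by
  intro b
  have h1 := main_bound hADC hU hLF a b
  have h2 : augC aug (dmap deg diff true 0 a) = 1 := hcoh
  rw [h2] at h1
  exact_mod_cast h1
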